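/- arXiv:2203.05727 — 3 statements merged into one kernel-verified Lean document; each statement's English description precedes it below -/
import Mathlib

section
/- Let K be a finite abstract simplicial complex and let 𝒱 and 𝒱' be multivector fields on K where 𝒱' is an atomic refinement of 𝒱. If A ⊆ K is convex and 𝒱-compatible, then (cl(A), mo(A)) is an index pair for inv_𝒱(A) under 𝒱 and also an index pair for inv_{𝒱'}(A) under 𝒱'. -/
open scoped Classical

namespace CDS

variable {α : Type*} [DecidableEq α]

/-- A finite abstract simplicial complex: a finite collection of nonempty finite
sets (simplices) closed under taking nonempty subsets. -/
def IsComplex (K : Finset (Finset α)) : Prop :=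
  (∀ σ ∈ K, σ.Nonempty) ∧ ∀ σ ∈ K, ∀ τ : Finset α, τ ⊆ σ → τ.Nonempty → τ ∈ K

/-- The closure of `A` in `K`. -/
def cl (K : Finset (Finset α)) (A : Set (Finset α)) : Set (Finset α) :=
  {σ | σ ∈ K ∧ ∃ τ ∈ A, σ ⊆ τ}

/-- `A` is closed in `K`. -/
def IsClosedIn (K : Finset (Finset α)) (A : Set (Finset α)) : Prop :=
  A = cl K A

/-- The mouth of `A` in `K`. -/
def mo (K : Finset (Finset α)) (A : Set (Finset α)) : Set (Finset α) :=
  cl K A \ A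

/-- `A` is convex with respect to the face poset of `K`. -/
def IsConvex (K : Finset (Finset α)) (A : Set (Finset α)) : Prop :=
  ∀ σ ∈ A, ∀ τ ∈ A, ∀ ρ : Finset α, ρ ∈ K → σ ⊆ ρ → ρ ⊆ τ → ρ ∈ A

/-- A multivector field on `K`: a partition of `K` into convex subsets
(multivectors). -/
structure MVF (K : Finset (Finset α)) where
  vecs : Set (Set (Finset α))
  sub : ∀ V ∈ vecs, V ⊆ (K : Set (Finset α))
  convex : ∀ V ∈ vecs, IsConvex K V
  nonempty : ∀ V ∈ vecs, V.Nonempty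
  cover : ∀ σ ∈ K, ∃ V ∈ vecs, σ ∈ V
  disjoint : ∀ V ∈ vecs, ∀ W ∈ vecs, (V ∩ W).Nonempty → V = W

variable {K : Finset (Finset α)}

/-- `[σ]_𝒱`, the multivector of `𝒱` containing `σ`. -/
def mv (𝒱 : MVF K) (σ : Finset α) : Set (Finset α) :=
  ⋃₀ {V | V ∈ 𝒱.vecs ∧ σ ∈ V}

/-- The induced multivalued map `F_𝒱` on simplices. -/
def Fv (𝒱 : MVF K) (σ : Finset α) : Set (Finset α) :=
  cl K {σ} ∪ mv 𝒱 σ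

/-- `F_𝒱` applied to a set. -/
def Fs (𝒱 : MVF K) (A : Set (Finset α)) : Set (Finset α) :=
  ⋃ σ ∈ A, Fv 𝒱 σ

/-- `ρ` is a path of length `n` in `N`. -/
def IsPathIn (𝒱 : MVF K) (N : Set (Finset α)) (n : ℕ) (ρ : ℕ → Finset α) : Prop :=
  (∀ i < n, ρ (i + 1) ∈ Fv 𝒱 (ρ i)) ∧ ∀ i ≤ n, ρ i ∈ N

/-- `ρ` is a (full) solution. -/
def IsSolution (𝒱 : MVF K) (ρ : ℤ → Finset α) : Prop :=
  ∀ i : ℤ, ρ (i + 1) ∈ Fv 𝒱 (ρ i)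

/-- The mod 2 simplicial boundary operator (summing over faces in `K`). -/
def bdry (K : Finset (Finset α)) (c : Finset α → ZMod 2) (τ : Finset α) : ZMod 2 :=
  ∑ σ ∈ K, if τ ⊆ σ ∧ σ.card = τ.card + 1 then c σ else 0

/-- Relative `n`-chains of the pair `(P, E)`: mod 2 chains supported on
`(n+1)`-element simplices of `P \ E`. -/
def chains (P E : Set (Finset α)) (n : ℕ) : Set (Finset α → ZMod 2) :=
  {c | ∀ σ, c σ ≠ 0 → σ ∈ P \ E ∧ σ.card = n + 1}

/-- The relative boundary operator of the pair `(P, E)`. -/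
noncomputable def relBdry (K : Finset (Finset α)) (P E : Set (Finset α))
    (c : Finset α → ZMod 2) : Finset α → ZMod 2 :=
  (P \ E).indicator (bdry K c)

/-- The relative simplicial homology (with ℤ/2 coefficients) of the pair
`(P, E)` is nonzero: in some dimension there is a relative cycle that is not a
relative boundary. -/
def HasNonzeroHomology (K : Finset (Finset α)) (P E : Set (Finset α)) : Prop :=
  ∃ (n : ℕ) (c : Finset α → ZMod 2), c ∈ chains P E n ∧ relBdry K P E c = 0 ∧
    ∀ d ∈ chains P E (n + 1), relBdry K P E d ≠ c

/-- A multivector `V` is critical if `H(cl V, mo V) ≠ 0`. -/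
def IsCritical (K : Finset (Finset α)) (V : Set (Finset α)) : Prop :=
  HasNonzeroHomology K (cl K V) (mo K V)

/-- Essential solutions. -/
def IsEssential (𝒱 : MVF K) (ρ : ℤ → Finset α) : Prop :=
  IsSolution 𝒱 ρ ∧ ∀ i : ℤ, ¬ IsCritical K (mv 𝒱 (ρ i)) →
    (∃ j, j < i ∧ mv 𝒱 (ρ j) ≠ mv 𝒱 (ρ i)) ∧
    (∃ j, i < j ∧ mv 𝒱 (ρ j) ≠ mv 𝒱 (ρ i))

/-- The invariant part of `A`: all simplices through which an essential
solution with values in `A` passes. -/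
def invPart (𝒱 : MVF K) (A : Set (Finset α)) : Set (Finset α) :=
  {σ | ∃ ρ : ℤ → Finset α, IsEssential 𝒱 ρ ∧ (∀ i, ρ i ∈ A) ∧ ∃ i, ρ i = σ}

/-- `S` is an invariant set. -/
def IsInvariantSet (𝒱 : MVF K) (S : Set (Finset α)) : Prop :=
  invPart 𝒱 S = S

/-- The closed set `N` isolates `S`. -/
def Isolates (𝒱 : MVF K) (N S : Set (Finset α)) : Prop :=
  IsClosedIn K N ∧ Fs 𝒱 S ⊆ N ∧
    ∀ (n : ℕ) (ρ : ℕ → Finset α), IsPathIn 𝒱 N n ρ → ρ 0 ∈ S → ρ n ∈ S →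
      ∀ i ≤ n, ρ i ∈ S

/-- `S` is an isolated invariant set. -/
def IsIsolatedInvariantSet (𝒱 : MVF K) (S : Set (Finset α)) : Prop :=
  IsInvariantSet 𝒱 S ∧ ∃ N, Isolates 𝒱 N S

/-- `A` is `𝒱`-compatible: a union of multivectors of `𝒱`. -/
def IsCompatible (𝒱 : MVF K) (A : Set (Finset α)) : Prop :=
  ∃ R ⊆ 𝒱.vecs, A = ⋃₀ R

/-- `(P, E)` is an index pair for `S` under `𝒱`. -/
def IsIndexPair (𝒱 : MVF K) (S P E : Set (Finset α)) : Prop :=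
  IsClosedIn K P ∧ IsClosedIn K E ∧ E ⊆ P ∧
    Fs 𝒱 (P \ E) ⊆ P ∧ Fs 𝒱 E ∩ P ⊆ E ∧ invPart 𝒱 (P \ E) = S

/-- `(P, E)` is an index pair for `S` in `N` under `𝒱`. -/
def IsIndexPairIn (𝒱 : MVF K) (N S P E : Set (Finset α)) : Prop :=
  IsClosedIn K P ∧ IsClosedIn K E ∧ E ⊆ P ∧
    Fs 𝒱 (P \ E) ⊆ N ∧ Fs 𝒱 E ∩ N ⊆ E ∧ Fs 𝒱 P ∩ N ⊆ P ∧
    invPart 𝒱 (P \ E) = S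

/-- The push forward `pf_𝒱(A, N)` of `A` in `N`. -/
def pf (𝒱 : MVF K) (A N : Set (Finset α)) : Set (Finset α) :=
  {σ | σ ∈ N ∧ ∃ (n : ℕ) (ρ : ℕ → Finset α), IsPathIn 𝒱 N n ρ ∧ ρ 0 ∈ A ∧ ρ n = σ}

/-- `𝒲` is an atomic refinement of `𝒱` (equivalently, `𝒱` is an atomic
coarsening of `𝒲`). -/
def AtomicRefinement (𝒲 𝒱 : MVF K) : Prop :=
  (∀ W ∈ 𝒲.vecs, ∃ V ∈ 𝒱.vecs, W ⊆ V) ∧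
    (𝒱.vecs \ 𝒲.vecs).ncard = 1 ∧ (𝒲.vecs \ 𝒱.vecs).ncard = 2

/-- `𝒱` and `𝒲` are atomic rearrangements of each other. -/
def AtomicRearrangement (𝒱 𝒲 : MVF K) : Prop :=
  AtomicRefinement 𝒲 𝒱 ∨ AtomicRefinement 𝒱 𝒲

/-- `⟨B⟩_𝒱`: the intersection of all convex and `𝒱`-compatible subsets of `K`
containing `B`. -/
def hull (𝒱 : MVF K) (B : Set (Finset α)) : Set (Finset α) :=
  ⋂₀ {A | A ⊆ (K : Set (Finset α)) ∧ IsConvex K A ∧ IsCompatible 𝒱 A ∧ B ⊆ A}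

lemma subset_cl' {A : Set (Finset α)} (hAK : A ⊆ (K : Set (Finset α))) :
    A ⊆ cl K A := fun σ hσ => ⟨hAK hσ, σ, hσ, subset_rfl⟩

lemma cl_diff_mo' {A : Set (Finset α)} (hAK : A ⊆ (K : Set (Finset α))) :
    cl K A \ mo K A = A := by
  ext σ
  constructor
  · rintro ⟨h1, h2⟩
    by_contra h
    exact h2 ⟨h1, h⟩
  · intro h
    exact ⟨subset_cl' hAK h, fun hm => hm.2 h⟩

lemma isClosedIn_cl' (A : Set (Finset α)) : IsClosedIn K (cl K A) := by
  apply Set.Subset.antisymm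
  · intro σ hσ
    exact ⟨hσ.1, σ, hσ, subset_rfl⟩
  · rintro σ ⟨hσK, τ, ⟨hτK, τ', hτ', hsub⟩, hst⟩
    exact ⟨hσK, τ', hτ', hst.trans hsub⟩

lemma isClosedIn_mo' {A : Set (Finset α)} (hconv : IsConvex K A) :
    IsClosedIn K (mo K A) := by
  apply Set.Subset.antisymm
  · intro σ hσ
    exact ⟨hσ.1.1, σ, hσ, subset_rfl⟩
  · rintro σ ⟨hσK, τ, ⟨⟨hτK, τ', hτ', hττ'⟩, hτA⟩, hστ⟩
    refine ⟨⟨hσK, τ', hτ', hστ.trans hττ'⟩, fun hσA => ?_⟩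
    exact hτA (hconv σ hσA τ' hτ' τ hτK hστ hττ')

theorem aux_indexPair (𝒲 : MVF K) (A : Set (Finset α))
    (hAK : A ⊆ (K : Set (Finset α))) (hconv : IsConvex K A)
    (habs : ∀ V ∈ 𝒲.vecs, (V ∩ A).Nonempty → V ⊆ A) :
    IsIndexPair 𝒲 (invPart 𝒲 A) (cl K A) (mo K A) := by
  have hdiff : cl K A \ mo K A = A := cl_diff_mo' hAK
  have mvA : ∀ σ τ : Finset α, τ ∈ mv 𝒲 σ → (σ ∈ A ↔ τ ∈ A) := by
    rintro σ τ ⟨V, ⟨hV, hσ⟩, hτ⟩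
    exact ⟨fun h => habs V hV ⟨σ, hσ, h⟩ hτ, fun h => habs V hV ⟨τ, hτ, h⟩ hσ⟩
  refine ⟨isClosedIn_cl' A, isClosedIn_mo' hconv, fun σ h => h.1, ?_, ?_, ?_⟩
  · rw [hdiff]
    rintro τ hτ
    simp only [Fs, Set.mem_iUnion] at hτ
    obtain ⟨σ, hσA, hτF⟩ := hτ
    rcases hτF with hcl | hmv
    · obtain ⟨hτK, τ', hτ', hsub⟩ := hcl
      rcases hτ' with rfl
      exact ⟨hτK, τ', hσA, hsub⟩
    · exact subset_cl' hAK ((mvA σ τ hmv).1 hσA)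
  · rintro τ ⟨hτF, hτcl⟩
    simp only [Fs, Set.mem_iUnion] at hτF
    obtain ⟨σ, hσmo, hτF⟩ := hτF
    obtain ⟨⟨hσK, τ', hτ'A, hστ'⟩, hσA⟩ := hσmo
    refine ⟨hτcl, fun hτA => ?_⟩
    rcases hτF with hcl | hmv
    · obtain ⟨hτK, σ', hσ', hsub⟩ := hcl
      rcases hσ' with rfl
      exact hσA (hconv τ hτA τ' hτ'A σ' hσK hsub hστ')
    · exact hσA ((mvA σ τ hmv).2 hτA)
  · rw [hdiff]

/-- If `𝒱'` is an atomic refinement of `𝒱` and `A` is convex and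
`𝒱`-compatible, then `(cl A, mo A)` is an index pair for `inv_𝒱(A)` under `𝒱`
and for `inv_𝒱'(A)` under `𝒱'`. -/
theorem refinement_indexPair (hK : IsComplex K) (𝒱 𝒱' : MVF K)
    (href : AtomicRefinement 𝒱' 𝒱) (A : Set (Finset α))
    (hAK : A ⊆ (K : Set (Finset α)))
    (hconv : IsConvex K A) (hcomp : IsCompatible 𝒱 A) :
    IsIndexPair 𝒱 (invPart 𝒱 A) (cl K A) (mo K A) ∧
      IsIndexPair 𝒱' (invPart 𝒱' A) (cl K A) (mo K A) := by
  obtain ⟨R, hR, hA⟩ := hcomp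
  have habs : ∀ V ∈ 𝒱.vecs, (V ∩ A).Nonempty → V ⊆ A := by
    rintro V hV ⟨τ, hτV, hτA⟩
    rw [hA] at hτA ⊢
    obtain ⟨W, hW, hτW⟩ := hτA
    have hVW : V = W := 𝒱.disjoint V hV W (hR hW) ⟨τ, hτV, hτW⟩
    rw [hVW]
    exact Set.subset_sUnion_of_mem hW
  have habs' : ∀ V ∈ 𝒱'.vecs, (V ∩ A).Nonempty → V ⊆ A := by
    rintro V' hV' ⟨τ, hτV', hτA⟩
    obtain ⟨V, hV, hsub⟩ := href.1 V' hV'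
    exact hsub.trans (habs V hV ⟨τ, hsub hτV', hτA⟩)
  exact ⟨aux_indexPair 𝒱 A hAK hconv habs, aux_indexPair 𝒱' A hAK hconv habs'⟩

end CDS
end

section
/- Let K be a finite abstract simplicial complex, let S be an isolated invariant set under a multivector field 𝒱 on K, and let 𝒱' be an atomic coarsening of 𝒱 whose merged multivector V satisfies V ∩ S ≠ ∅ and V ⊄ S. Let A := ⟨S ∪ V⟩_{𝒱'} and suppose inv_𝒱(A) = S. Then, setting S' := inv_{𝒱'}(A), we have S ⊆ S' or S' ⊆ S. -/
open scoped Classical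

namespace CDS

variable {α : Type*} [DecidableEq α]

variable {K : Finset (Finset α)}

lemma mv_eq_of_mem (𝒲 : MVF K) {σ : Finset α} {W : Set (Finset α)}
    (hW : W ∈ 𝒲.vecs) (hσ : σ ∈ W) : mv 𝒲 σ = W := by
  apply Set.eq_of_subset_of_subset
  · rintro τ ⟨U, ⟨hU, hσU⟩, hτU⟩
    rwa [𝒲.disjoint U hU W hW ⟨σ, hσU, hσ⟩] at hτU
  · intro τ hτ
    exact ⟨W, ⟨hW, hσ⟩, hτ⟩

lemma mem_mv_self (𝒲 : MVF K) {σ : Finset α} (h : σ ∈ K) : σ ∈ mv 𝒲 σ := by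
  obtain ⟨W, hW, hσ⟩ := 𝒲.cover σ h
  exact ⟨W, ⟨hW, hσ⟩, hσ⟩

lemma sol_mem_K (𝒲 : MVF K) {ρ : ℤ → Finset α} (h : IsSolution 𝒲 ρ) (i : ℤ) : ρ i ∈ K := by
  have h' : ρ (i - 1 + 1) ∈ cl K {ρ (i - 1)} ∪ mv 𝒲 (ρ (i - 1)) := h (i - 1)
  rw [sub_add_cancel] at h'
  rcases h' with h' | h'
  · exact h'.1
  · obtain ⟨U, ⟨hU, _⟩, hmem⟩ := h'
    exact 𝒲.sub U hU hmem

lemma merged_unique {𝒱 𝒱' : MVF K} {V : Set (Finset α)} (hco : AtomicRefinement 𝒱 𝒱')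
    (hV : V ∈ 𝒱'.vecs \ 𝒱.vecs) : 𝒱'.vecs \ 𝒱.vecs = {V} := by
  obtain ⟨x, hx⟩ := Set.ncard_eq_one.mp hco.2.1
  rw [hx] at hV ⊢
  obtain rfl : V = x := Set.mem_singleton_iff.mp hV
  rfl

lemma mv'_ne_V {𝒱' : MVF K} {V : Set (Finset α)} {σ : Finset α}
    (hσK : σ ∈ K) (hσ : σ ∉ V) : mv 𝒱' σ ≠ V :=
  fun h => hσ (h ▸ mem_mv_self 𝒱' hσK)

lemma mv'_eq_mv {𝒱 𝒱' : MVF K} {V : Set (Finset α)} (hco : AtomicRefinement 𝒱 𝒱')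
    (hV : V ∈ 𝒱'.vecs \ 𝒱.vecs) {σ : Finset α} (hσK : σ ∈ K) (hσ : σ ∉ V) :
    mv 𝒱' σ = mv 𝒱 σ := by
  obtain ⟨W, hW, hσW⟩ := 𝒱'.cover σ hσK
  have hWne : W ≠ V := fun h => hσ (h ▸ hσW)
  have hW𝒱 : W ∈ 𝒱.vecs := by
    by_contra h
    have hmem : W ∈ 𝒱'.vecs \ 𝒱.vecs := ⟨hW, h⟩
    rw [merged_unique hco hV] at hmem
    exact hWne hmem
  rw [mv_eq_of_mem 𝒱' hW hσW, mv_eq_of_mem 𝒱 hW𝒱 hσW]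

lemma mv_subset_mv' {𝒱 𝒱' : MVF K} (hco : AtomicRefinement 𝒱 𝒱') {σ : Finset α}
    (hσK : σ ∈ K) : mv 𝒱 σ ⊆ mv 𝒱' σ := by
  obtain ⟨U, hU, hσU⟩ := 𝒱.cover σ hσK
  obtain ⟨U', hU', hUU'⟩ := hco.1 U hU
  rw [mv_eq_of_mem 𝒱 hU hσU, mv_eq_of_mem 𝒱' hU' (hUU' hσU)]
  exact hUU'

lemma sol_mono {𝒱 𝒱' : MVF K} (hco : AtomicRefinement 𝒱 𝒱') {ρ : ℤ → Finset α}
    (h : IsSolution 𝒱 ρ) : IsSolution 𝒱' ρ := by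
  intro i
  have h' : ρ (i + 1) ∈ cl K {ρ i} ∪ mv 𝒱 (ρ i) := h i
  rcases h' with h' | h'
  · exact Set.mem_union_left _ h'
  · exact Set.mem_union_right _ (mv_subset_mv' hco (sol_mem_K 𝒱 h i) h')

lemma escape_transfer {𝒱 𝒱' : MVF K} {V : Set (Finset α)} (hco : AtomicRefinement 𝒱 𝒱')
    (hV : V ∈ 𝒱'.vecs \ 𝒱.vecs) {τ τ' : Finset α} (hτK : τ ∈ K) (hτ'K : τ' ∈ K)
    (hτV : τ ∉ V) (h : mv 𝒱 τ' ≠ mv 𝒱 τ) : mv 𝒱' τ' ≠ mv 𝒱' τ := by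
  rw [mv'_eq_mv hco hV hτK hτV]
  intro hEq
  apply h
  have hτ'mem : τ' ∈ mv 𝒱 τ := hEq ▸ mem_mv_self 𝒱' hτ'K
  obtain ⟨U, hU, hτU⟩ := 𝒱.cover τ hτK
  rw [mv_eq_of_mem 𝒱 hU hτU] at hτ'mem ⊢
  exact mv_eq_of_mem 𝒱 hU hτ'mem

lemma essential_shift (𝒲 : MVF K) {ρ : ℤ → Finset α} (h : IsEssential 𝒲 ρ) (t : ℤ) :
    IsEssential 𝒲 (fun j => ρ (j + t)) := by
  constructor
  · intro i
    show ρ (i + 1 + t) ∈ Fv 𝒲 (ρ (i + t))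
    have e : i + 1 + t = (i + t) + 1 := by ring
    rw [e]
    exact h.1 (i + t)
  · intro i hi
    obtain ⟨⟨j₁, hj₁, hne₁⟩, ⟨j₂, hj₂, hne₂⟩⟩ := h.2 (i + t) hi
    constructor
    · refine ⟨j₁ - t, by omega, ?_⟩
      show mv 𝒲 (ρ (j₁ - t + t)) ≠ mv 𝒲 (ρ (i + t))
      rw [sub_add_cancel]
      exact hne₁
    · refine ⟨j₂ - t, by omega, ?_⟩
      show mv 𝒲 (ρ (j₂ - t + t)) ≠ mv 𝒲 (ρ (i + t))
      rw [sub_add_cancel]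
      exact hne₂

/-- If `𝒱'` is an atomic coarsening of `𝒱` with merged multivector `V`,
`V ∩ S ≠ ∅`, `V ⊄ S`, `A = ⟨S ∪ V⟩_𝒱'` and `inv_𝒱(A) = S`, then setting
`S' = inv_𝒱'(A)` we have `S ⊆ S'` or `S' ⊆ S`. -/
theorem coarsen_between_inclusion (hK : IsComplex K) (𝒱 𝒱' : MVF K)
    (S : Set (Finset α)) (hS : IsIsolatedInvariantSet 𝒱 S)
    (hco : AtomicRefinement 𝒱 𝒱') (V : Set (Finset α))
    (hV : V ∈ 𝒱'.vecs \ 𝒱.vecs)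
    (hVS : (V ∩ S).Nonempty) (hVnS : ¬ V ⊆ S)
    (hSA : invPart 𝒱 (hull 𝒱' (S ∪ V)) = S) :
    S ⊆ invPart 𝒱' (hull 𝒱' (S ∪ V)) ∨
      invPart 𝒱' (hull 𝒱' (S ∪ V)) ⊆ S := by
  classical
  set A := hull 𝒱' (S ∪ V) with hA
  by_cases hss : invPart 𝒱' A ⊆ S
  · exact Or.inr hss
  refine Or.inl ?_
  obtain ⟨σs, hσs', hσsS⟩ := Set.not_subset.mp hss
  obtain ⟨γ, hγess, hγA, is, hγis⟩ := hσs'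
  have hγK : ∀ i, γ i ∈ K := sol_mem_K 𝒱' hγess.1
  have hγV : ∃ b, γ b ∈ V := by
    by_contra hnb
    push_neg at hnb
    have hmv : ∀ i, mv 𝒱' (γ i) = mv 𝒱 (γ i) :=
      fun i => mv'_eq_mv hco hV (hγK i) (hnb i)
    have hsolv : IsSolution 𝒱 γ := by
      intro i
      have h' : γ (i + 1) ∈ cl K {γ i} ∪ mv 𝒱' (γ i) := hγess.1 i
      rw [hmv i] at h'
      exact h'
    have hessv : IsEssential 𝒱 γ := by
      refine ⟨hsolv, fun i hi => ?_⟩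
      rw [← hmv i] at hi
      obtain ⟨⟨j₁, hj₁, hne₁⟩, ⟨j₂, hj₂, hne₂⟩⟩ := hγess.2 i hi
      rw [hmv i, hmv j₁] at hne₁
      rw [hmv i, hmv j₂] at hne₂
      exact ⟨⟨j₁, hj₁, hne₁⟩, ⟨j₂, hj₂, hne₂⟩⟩
    have hmem : σs ∈ S := by
      rw [← hSA]
      exact ⟨γ, hessv, hγA, is, hγis⟩
    exact hσsS hmem
  obtain ⟨b, hbV⟩ := hγV
  have hSsubA : S ⊆ A := by
    intro τ hτ
    rw [hA]
    simp only [hull, Set.mem_sInter]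
    intro X hX
    exact hX.2.2.2 (Set.mem_union_left _ hτ)
  intro σ hσ
  have hinv : invPart 𝒱 S = S := hS.1
  rw [← hinv] at hσ
  obtain ⟨ρ₀, hρ₀ess, hρ₀S, i₀, hρ₀i⟩ := hσ
  set ρ : ℤ → Finset α := fun j => ρ₀ (j + i₀) with hρ
  have hρess : IsEssential 𝒱 ρ := essential_shift 𝒱 hρ₀ess i₀
  have hρS : ∀ i, ρ i ∈ S := fun i => hρ₀S (i + i₀)
  have hρ0 : ρ 0 = σ := by
    show ρ₀ (0 + i₀) = σ
    rw [zero_add]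
    exact hρ₀i
  have hρK : ∀ i, ρ i ∈ K := sol_mem_K 𝒱 hρess.1
  have hρA : ∀ i, ρ i ∈ A := fun i => hSsubA (hρS i)
  have hρsol' : IsSolution 𝒱' ρ := sol_mono hco hρess.1
  by_cases hC1 : IsCritical K V ∨ ∀ i, ρ i ∉ V
  · refine ⟨ρ, ⟨hρsol', ?_⟩, hρA, 0, hρ0⟩
    intro i hi
    have hiV : ρ i ∉ V := by
      intro hmem
      rcases hC1 with hc | hall
      · rw [mv_eq_of_mem 𝒱' hV.1 hmem] at hi
        exact hi hc
      · exact hall i hmem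
    have hmm := mv'_eq_mv hco hV (hρK i) hiV
    rw [hmm] at hi
    obtain ⟨⟨j₁, hj₁, hne₁⟩, ⟨j₂, hj₂, hne₂⟩⟩ := hρess.2 i hi
    exact ⟨⟨j₁, hj₁, escape_transfer hco hV (hρK i) (hρK j₁) hiV hne₁⟩,
           ⟨j₂, hj₂, escape_transfer hco hV (hρK i) (hρK j₂) hiV hne₂⟩⟩
  · push_neg at hC1
    obtain ⟨hcritV, a₀, ha₀⟩ := hC1
    have hcb : ¬ IsCritical K (mv 𝒱' (γ b)) := by
      rw [mv_eq_of_mem 𝒱' hV.1 hbV]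
      exact hcritV
    obtain ⟨⟨g₁, hg₁, hgne₁⟩, ⟨g₂, hg₂, hgne₂⟩⟩ := hγess.2 b hcb
    rw [mv_eq_of_mem 𝒱' hV.1 hbV] at hgne₁ hgne₂
    by_cases hneg : ∃ j, j ≤ (0:ℤ) ∧ ρ j ∈ V
    · by_cases hpos : ∃ j, (0:ℤ) ≤ j ∧ ρ j ∈ V
      · -- C2a : V-points on both sides of 0
        obtain ⟨p, hp0, hpV⟩ := hneg
        obtain ⟨q, hq0, hqV⟩ := hpos
        set δ : ℤ → Finset α := fun i =>
          if i < p then γ (i - p + 1 + b) else if i ≤ q then ρ i else γ (i - q - 1 + b)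
          with hδ
        have hδL : ∀ i, i < p → δ i = γ (i - p + 1 + b) := by
          intro i h; rw [hδ]; exact if_pos h
        have hδM : ∀ i, p ≤ i → i ≤ q → δ i = ρ i := by
          intro i h1 h2; rw [hδ]
          show (if i < p then _ else if i ≤ q then ρ i else _) = ρ i
          rw [if_neg (by omega), if_pos h2]
        have hδR : ∀ i, q < i → δ i = γ (i - q - 1 + b) := by
          intro i h; rw [hδ]
          show (if i < p then _ else if i ≤ q then _ else γ (i - q - 1 + b)) = _
          rw [if_neg (by omega), if_neg (by omega)]
        have hδsol : IsSolution 𝒱' δ := by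
          intro i
          by_cases h1 : i < p - 1
          · rw [hδL i (by omega), hδL (i+1) (by omega)]
            have e : i + 1 - p + 1 + b = (i - p + 1 + b) + 1 := by ring
            rw [e]; exact hγess.1 _
          · by_cases h2 : i = p - 1
            · rw [hδL i (by omega), hδM (i+1) (by omega) (by omega)]
              have e1 : i - p + 1 + b = b := by omega
              have e2 : i + 1 = p := by omega
              rw [e1, e2]
              exact Set.mem_union_right _
                (by rw [mv_eq_of_mem 𝒱' hV.1 hbV]; exact hpV)
            · by_cases h3 : i < q
              · rw [hδM i (by omega) (by omega), hδM (i+1) (by omega) (by omega)]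
                exact hρsol' i
              · by_cases h4 : i = q
                · rw [hδM i (by omega) (by omega), hδR (i+1) (by omega)]
                  have e : i + 1 - q - 1 + b = b := by omega
                  rw [e, h4]
                  exact Set.mem_union_right _
                    (by rw [mv_eq_of_mem 𝒱' hV.1 hqV]; exact hbV)
                · rw [hδR i (by omega), hδR (i+1) (by omega)]
                  have e : i + 1 - q - 1 + b = (i - q - 1 + b) + 1 := by ring
                  rw [e]; exact hγess.1 _
        have hδA : ∀ i, δ i ∈ A := by
          intro i
          by_cases h1 : i < p
          · rw [hδL i h1]; exact hγA _
          · by_cases h2 : i ≤ q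
            · rw [hδM i (by omega) h2]; exact hρA i
            · rw [hδR i (by omega)]; exact hγA _
        have hδess : ∀ i : ℤ, ¬ IsCritical K (mv 𝒱' (δ i)) →
            (∃ j, j < i ∧ mv 𝒱' (δ j) ≠ mv 𝒱' (δ i)) ∧
            (∃ j, i < j ∧ mv 𝒱' (δ j) ≠ mv 𝒱' (δ i)) := by
          intro i hi
          by_cases h1 : i < p
          · rw [hδL i h1] at hi
            obtain ⟨⟨j₁, hj₁, hne₁⟩, ⟨j₂, hj₂, hne₂⟩⟩ := hγess.2 _ hi
            constructor
            · refine ⟨j₁ + p - 1 - b, by omega, ?_⟩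
              rw [hδL _ (by omega), hδL i h1]
              have e : j₁ + p - 1 - b - p + 1 + b = j₁ := by ring
              rw [e]; exact hne₁
            · by_cases hMV : mv 𝒱' (γ (i - p + 1 + b)) = V
              · refine ⟨g₂ + q + 1 - b, by omega, ?_⟩
                rw [hδR _ (by omega), hδL i h1, hMV]
                have e : g₂ + q + 1 - b - q - 1 + b = g₂ := by ring
                rw [e]; exact hgne₂
              · have hlt : i < p - 1 := by
                  by_contra h
                  have e : i - p + 1 + b = b := by omega
                  rw [e, mv_eq_of_mem 𝒱' hV.1 hbV] at hMV
                  exact hMV rfl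
                refine ⟨p - 1, by omega, ?_⟩
                rw [hδL (p-1) (by omega), hδL i h1]
                have e : p - 1 - p + 1 + b = b := by ring
                rw [e, mv_eq_of_mem 𝒱' hV.1 hbV]
                exact fun h => hMV h.symm
          · by_cases h2 : i ≤ q
            · rw [hδM i (by omega) h2] at hi
              by_cases hiV : ρ i ∈ V
              · have hmvV : mv 𝒱' (ρ i) = V := mv_eq_of_mem 𝒱' hV.1 hiV
                constructor
                · refine ⟨g₁ + p - 1 - b, by omega, ?_⟩
                  rw [hδL _ (by omega), hδM i (by omega) h2, hmvV]
                  have e : g₁ + p - 1 - b - p + 1 + b = g₁ := by ring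
                  rw [e]; exact hgne₁
                · refine ⟨g₂ + q + 1 - b, by omega, ?_⟩
                  rw [hδR _ (by omega), hδM i (by omega) h2, hmvV]
                  have e : g₂ + q + 1 - b - q - 1 + b = g₂ := by ring
                  rw [e]; exact hgne₂
              · constructor
                · have hpi : p < i :=
                    lt_of_le_of_ne (by omega) (fun h => hiV (by rw [← h]; exact hpV))
                  refine ⟨p, hpi, ?_⟩
                  rw [hδM p le_rfl (by omega), hδM i (by omega) h2,
                    mv_eq_of_mem 𝒱' hV.1 hpV]
                  exact Ne.symm (mv'_ne_V (hρK i) hiV)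
                · have hiq : i < q :=
                    lt_of_le_of_ne h2 (fun h => hiV (by rw [h]; exact hqV))
                  refine ⟨q, hiq, ?_⟩
                  rw [hδM q (by omega) le_rfl, hδM i (by omega) h2,
                    mv_eq_of_mem 𝒱' hV.1 hqV]
                  exact Ne.symm (mv'_ne_V (hρK i) hiV)
            · rw [hδR i (by omega)] at hi
              obtain ⟨⟨j₁, hj₁, hne₁⟩, ⟨j₂, hj₂, hne₂⟩⟩ := hγess.2 _ hi
              constructor
              · by_cases hMV : mv 𝒱' (γ (i - q - 1 + b)) = V
                · refine ⟨g₁ + p - 1 - b, by omega, ?_⟩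
                  rw [hδL _ (by omega), hδR i (by omega), hMV]
                  have e : g₁ + p - 1 - b - p + 1 + b = g₁ := by ring
                  rw [e]; exact hgne₁
                · have hqi : q + 1 < i := by
                    by_contra h
                    have e : i - q - 1 + b = b := by omega
                    rw [e, mv_eq_of_mem 𝒱' hV.1 hbV] at hMV
                    exact hMV rfl
                  refine ⟨q + 1, hqi, ?_⟩
                  rw [hδR (q+1) (by omega), hδR i (by omega)]
                  have e : q + 1 - q - 1 + b = b := by ring
                  rw [e, mv_eq_of_mem 𝒱' hV.1 hbV]
                  exact fun h => hMV h.symm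
              · refine ⟨j₂ + q + 1 - b, by omega, ?_⟩
                rw [hδR _ (by omega), hδR i (by omega)]
                have e : j₂ + q + 1 - b - q - 1 + b = j₂ := by ring
                rw [e]; exact hne₂
        exact ⟨δ, ⟨hδsol, hδess⟩, hδA, 0, by rw [hδM 0 hp0 hq0]; exact hρ0⟩
      · -- C2c : V-points only at negative times
        push_neg at hpos
        obtain ⟨p, hp0, hpV⟩ := hneg
        have hplt : p < 0 := by
          by_contra h
          exact hpos p (by omega) hpV
        set δ : ℤ → Finset α := fun i => if p ≤ i then ρ i else γ (i - p + 1 + b) with hδ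
        have hδρ : ∀ i, p ≤ i → δ i = ρ i := by
          intro i h; rw [hδ]; exact if_pos h
        have hδγ : ∀ i, i < p → δ i = γ (i - p + 1 + b) := by
          intro i h; rw [hδ]; exact if_neg (by omega)
        have hδsol : IsSolution 𝒱' δ := by
          intro i
          by_cases h1 : i < p - 1
          · rw [hδγ i (by omega), hδγ (i+1) (by omega)]
            have e : i + 1 - p + 1 + b = (i - p + 1 + b) + 1 := by ring
            rw [e]; exact hγess.1 _
          · by_cases h2 : i = p - 1
            · rw [hδγ i (by omega), hδρ (i+1) (by omega)]
              have e1 : i - p + 1 + b = b := by omega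
              have e2 : i + 1 = p := by omega
              rw [e1, e2]
              exact Set.mem_union_right _
                (by rw [mv_eq_of_mem 𝒱' hV.1 hbV]; exact hpV)
            · rw [hδρ i (by omega), hδρ (i+1) (by omega)]
              exact hρsol' i
        have hδA : ∀ i, δ i ∈ A := by
          intro i
          by_cases h : p ≤ i
          · rw [hδρ i h]; exact hρA i
          · rw [hδγ i (by omega)]; exact hγA _
        have hδess : ∀ i : ℤ, ¬ IsCritical K (mv 𝒱' (δ i)) →
            (∃ j, j < i ∧ mv 𝒱' (δ j) ≠ mv 𝒱' (δ i)) ∧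
            (∃ j, i < j ∧ mv 𝒱' (δ j) ≠ mv 𝒱' (δ i)) := by
          intro i hi
          by_cases hip : p ≤ i
          · rw [hδρ i hip] at hi
            by_cases hiV : ρ i ∈ V
            · have hineg : i < 0 := by
                by_contra h
                exact hpos i (by omega) hiV
              have hmvV : mv 𝒱' (ρ i) = V := mv_eq_of_mem 𝒱' hV.1 hiV
              constructor
              · refine ⟨g₁ + p - 1 - b, by omega, ?_⟩
                rw [hδγ _ (by omega), hδρ i hip, hmvV]
                have e : g₁ + p - 1 - b - p + 1 + b = g₁ := by ring
                rw [e]; exact hgne₁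
              · refine ⟨0, hineg, ?_⟩
                rw [hδρ 0 (by omega), hδρ i hip, hmvV]
                exact mv'_ne_V (hρK 0) (hpos 0 le_rfl)
            · have hmm := mv'_eq_mv hco hV (hρK i) hiV
              have hi' : ¬ IsCritical K (mv 𝒱 (ρ i)) := by
                rw [← hmm]; exact hi
              obtain ⟨_, ⟨j₂, hj₂, hne₂⟩⟩ := hρess.2 i hi'
              constructor
              · have hpi : p < i :=
                  lt_of_le_of_ne hip (fun h => hiV (by rw [← h]; exact hpV))
                refine ⟨p, hpi, ?_⟩
                rw [hδρ p le_rfl, hδρ i hip, mv_eq_of_mem 𝒱' hV.1 hpV]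
                exact Ne.symm (mv'_ne_V (hρK i) hiV)
              · refine ⟨j₂, hj₂, ?_⟩
                rw [hδρ j₂ (by omega), hδρ i hip]
                exact escape_transfer hco hV (hρK i) (hρK j₂) hiV hne₂
          · rw [hδγ i (by omega)] at hi
            obtain ⟨⟨j₁, hj₁, hne₁⟩, ⟨j₂, hj₂, hne₂⟩⟩ := hγess.2 _ hi
            constructor
            · refine ⟨j₁ + p - 1 - b, by omega, ?_⟩
              rw [hδγ _ (by omega), hδγ i (by omega)]
              have e : j₁ + p - 1 - b - p + 1 + b = j₁ := by ring
              rw [e]; exact hne₁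
            · by_cases hMV : mv 𝒱' (γ (i - p + 1 + b)) = V
              · refine ⟨0, by omega, ?_⟩
                rw [hδρ 0 (by omega), hδγ i (by omega), hMV]
                exact mv'_ne_V (hρK 0) (hpos 0 le_rfl)
              · have hlt : i < p - 1 := by
                  by_contra h
                  have e : i - p + 1 + b = b := by omega
                  rw [e, mv_eq_of_mem 𝒱' hV.1 hbV] at hMV
                  exact hMV rfl
                refine ⟨p - 1, by omega, ?_⟩
                rw [hδγ (p-1) (by omega), hδγ i (by omega)]
                have e : p - 1 - p + 1 + b = b := by ring
                rw [e, mv_eq_of_mem 𝒱' hV.1 hbV]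
                exact fun h => hMV h.symm
        exact ⟨δ, ⟨hδsol, hδess⟩, hδA, 0, by rw [hδρ 0 (by omega)]; exact hρ0⟩
    · -- C2b : V-points only at positive times
      push_neg at hneg
      have hapos : 0 < a₀ := by
        by_contra h
        exact hneg a₀ (by omega) ha₀
      set δ : ℤ → Finset α := fun i => if i ≤ a₀ then ρ i else γ (i - a₀ - 1 + b) with hδ
      have hδρ : ∀ i, i ≤ a₀ → δ i = ρ i := by
        intro i h; rw [hδ]; exact if_pos h
      have hδγ : ∀ i, a₀ < i → δ i = γ (i - a₀ - 1 + b) := by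
        intro i h; rw [hδ]; exact if_neg (by omega)
      have hδsol : IsSolution 𝒱' δ := by
        intro i
        by_cases h1 : i < a₀
        · rw [hδρ i h1.le, hδρ (i+1) (by omega)]
          exact hρsol' i
        · by_cases h2 : i = a₀
          · rw [hδρ i (by omega), hδγ (i+1) (by omega)]
            have e : i + 1 - a₀ - 1 + b = b := by omega
            rw [e]
            exact Set.mem_union_right _
              (by rw [h2, mv_eq_of_mem 𝒱' hV.1 ha₀]; exact hbV)
          · rw [hδγ i (by omega), hδγ (i+1) (by omega)]
            have e : i + 1 - a₀ - 1 + b = (i - a₀ - 1 + b) + 1 := by ring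
            rw [e]; exact hγess.1 _
      have hδA : ∀ i, δ i ∈ A := by
        intro i
        by_cases h : i ≤ a₀
        · rw [hδρ i h]; exact hρA i
        · rw [hδγ i (by omega)]; exact hγA _
      have hδess : ∀ i : ℤ, ¬ IsCritical K (mv 𝒱' (δ i)) →
          (∃ j, j < i ∧ mv 𝒱' (δ j) ≠ mv 𝒱' (δ i)) ∧
          (∃ j, i < j ∧ mv 𝒱' (δ j) ≠ mv 𝒱' (δ i)) := by
        intro i hi
        by_cases hia : i ≤ a₀
        · rw [hδρ i hia] at hi
          by_cases hiV : ρ i ∈ V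
          · have hi0 : 0 < i := by
              by_contra h
              exact hneg i (by omega) hiV
            have hmvV : mv 𝒱' (ρ i) = V := mv_eq_of_mem 𝒱' hV.1 hiV
            constructor
            · refine ⟨0, hi0, ?_⟩
              rw [hδρ 0 (by omega), hδρ i hia, hmvV]
              exact mv'_ne_V (hρK 0) (hneg 0 le_rfl)
            · refine ⟨g₂ - b + a₀ + 1, by omega, ?_⟩
              rw [hδγ _ (by omega), hδρ i hia, hmvV]
              have e : g₂ - b + a₀ + 1 - a₀ - 1 + b = g₂ := by ring
              rw [e]; exact hgne₂
          · have hmm := mv'_eq_mv hco hV (hρK i) hiV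
            have hi' : ¬ IsCritical K (mv 𝒱 (ρ i)) := by
              rw [← hmm]; exact hi
            obtain ⟨⟨j₁, hj₁, hne₁⟩, _⟩ := hρess.2 i hi'
            constructor
            · refine ⟨j₁, hj₁, ?_⟩
              rw [hδρ j₁ (by omega), hδρ i hia]
              exact escape_transfer hco hV (hρK i) (hρK j₁) hiV hne₁
            · have hilt : i < a₀ :=
                lt_of_le_of_ne hia (fun h => hiV (by rw [h]; exact ha₀))
              refine ⟨a₀, hilt, ?_⟩
              rw [hδρ a₀ le_rfl, hδρ i hia, mv_eq_of_mem 𝒱' hV.1 ha₀]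
              exact Ne.symm (mv'_ne_V (hρK i) hiV)
        · rw [hδγ i (by omega)] at hi
          obtain ⟨⟨j₁, hj₁, hne₁⟩, ⟨j₂, hj₂, hne₂⟩⟩ := hγess.2 _ hi
          constructor
          · by_cases hMV : mv 𝒱' (γ (i - a₀ - 1 + b)) = V
            · refine ⟨0, by omega, ?_⟩
              rw [hδρ 0 (by omega), hδγ i (by omega), hMV]
              exact mv'_ne_V (hρK 0) (hneg 0 le_rfl)
            · have hbk : a₀ + 1 < i := by
                by_contra h
                have e : i - a₀ - 1 + b = b := by omega
                rw [e, mv_eq_of_mem 𝒱' hV.1 hbV] at hMV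
                exact hMV rfl
              refine ⟨a₀ + 1, hbk, ?_⟩
              rw [hδγ (a₀+1) (by omega), hδγ i (by omega)]
              have e : a₀ + 1 - a₀ - 1 + b = b := by ring
              rw [e, mv_eq_of_mem 𝒱' hV.1 hbV]
              exact fun h => hMV h.symm
          · refine ⟨j₂ - b + a₀ + 1, by omega, ?_⟩
            rw [hδγ _ (by omega), hδγ i (by omega)]
            have e : j₂ - b + a₀ + 1 - a₀ - 1 + b = j₂ := by ring
            rw [e]; exact hne₂
      exact ⟨δ, ⟨hδsol, hδess⟩, hδA, 0, by rw [hδρ 0 (by omega)]; exact hρ0⟩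

end CDS
end

section
/- Let K be a finite abstract simplicial complex, let S be an isolated invariant set under a multivector field 𝒱 on K, and let 𝒱' be an atomic coarsening of 𝒱 whose merged multivector V satisfies V ∩ S ≠ ∅ and V ⊄ S. Let A := ⟨S ∪ V⟩_{𝒱'}, suppose inv_𝒱(A) = S, and set S' := inv_{𝒱'}(A). If S'' is an isolated invariant set under 𝒱' for which there exists a pair (P, E) that is simultaneously an index pair for S under 𝒱 and an index pair for S'' under 𝒱', then S' ⊆ S''; moreover, if in addition S'' ⊆ S, then S' = S''. -/
open scoped Classical

namespace CDS

variable {α : Type*} [DecidableEq α]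

variable {K : Finset (Finset α)}

private lemma invPart_subset (𝒱 : MVF K) (A : Set (Finset α)) : invPart 𝒱 A ⊆ A := by
  rintro σ ⟨ρ, -, hA, i, rfl⟩; exact hA i

private lemma invPart_mono (𝒱 : MVF K) {A B : Set (Finset α)} (h : A ⊆ B) :
    invPart 𝒱 A ⊆ invPart 𝒱 B := by
  rintro σ ⟨ρ, he, hA, i, rfl⟩
  exact ⟨ρ, he, fun j => h (hA j), i, rfl⟩

/-- Minimality of `S' = inv_𝒱'(A)` in Step (d) of the Tracking Protocol:
if `𝒱'` is an atomic coarsening of `𝒱` whose merged multivector `V` satisfies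
`V ∩ S ≠ ∅` and `V ⊄ S`, `A = ⟨S ∪ V⟩_𝒱'`, and `inv_𝒱(A) = S`, then any
isolated invariant set `S''` under `𝒱'` sharing an index pair with `S`
contains `S'`, and if moreover `S'' ⊆ S` then `S' = S''`. -/
theorem tracked_set_minimal_coarsen_between (hK : IsComplex K) (𝒱 𝒱' : MVF K)
    (S : Set (Finset α)) (hS : IsIsolatedInvariantSet 𝒱 S)
    (hco : AtomicRefinement 𝒱 𝒱') (V : Set (Finset α))
    (hV : V ∈ 𝒱'.vecs \ 𝒱.vecs)
    (hVS : (V ∩ S).Nonempty) (hVnS : ¬ V ⊆ S)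
    (hSA : invPart 𝒱 (hull 𝒱' (S ∪ V)) = S) :
    ∀ S'' P E : Set (Finset α), IsIsolatedInvariantSet 𝒱' S'' →
      IsIndexPair 𝒱 S P E → IsIndexPair 𝒱' S'' P E →
      invPart 𝒱' (hull 𝒱' (S ∪ V)) ⊆ S'' ∧
        (S'' ⊆ S → invPart 𝒱' (hull 𝒱' (S ∪ V)) = S'') := by
  intro S'' P E hS'' hIP hIP'
  obtain ⟨hPc, -, -, -, -, hinvS⟩ := hIP
  obtain ⟨-, -, -, hF1', hF2', hinv''⟩ := hIP'
  have hPK : P ⊆ (K : Set (Finset α)) := by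
    rw [hPc]; intro σ hσ; exact hσ.1
  -- `P \ E` absorbs multivectors of `𝒱'`
  have hmv : ∀ σ ∈ P \ E, mv 𝒱' σ ⊆ P \ E := by
    intro σ hσ τ hτ
    obtain ⟨W, ⟨hW, hσW⟩, hτW⟩ := hτ
    have hτFv : τ ∈ Fv 𝒱' σ := Set.mem_union_right _ ⟨W, ⟨hW, hσW⟩, hτW⟩
    have hτP : τ ∈ P := hF1' (Set.mem_biUnion hσ hτFv)
    refine ⟨hτP, fun hτE => hσ.2 ?_⟩
    have hσFv : σ ∈ Fv 𝒱' τ := Set.mem_union_right _ ⟨W, ⟨hW, hτW⟩, hσW⟩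
    exact hF2' ⟨Set.mem_biUnion hτE hσFv, hσ.1⟩
  -- `P \ E` is convex
  have hconv : IsConvex K (P \ E) := by
    intro σ hσ τ hτ ρ hρK hσρ hρτ
    have hρFv : ρ ∈ Fv 𝒱' τ :=
      Set.mem_union_left _ ⟨hρK, τ, rfl, hρτ⟩
    have hρP : ρ ∈ P := hF1' (Set.mem_biUnion hτ hρFv)
    refine ⟨hρP, fun hρE => hσ.2 ?_⟩
    have hσK : σ ∈ K := Finset.mem_coe.mp (hPK hσ.1)
    have hσFv : σ ∈ Fv 𝒱' ρ :=
      Set.mem_union_left _ ⟨hσK, ρ, rfl, hσρ⟩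
    exact hF2' ⟨Set.mem_biUnion hρE hσFv, hσ.1⟩
  -- `P \ E` is `𝒱'`-compatible
  have hcomp : IsCompatible 𝒱' (P \ E) := by
    refine ⟨{W | W ∈ 𝒱'.vecs ∧ W ⊆ P \ E}, fun W hW => hW.1, ?_⟩
    ext σ
    constructor
    · intro hσ
      obtain ⟨W, hW, hσW⟩ := 𝒱'.cover σ (Finset.mem_coe.mp (hPK hσ.1))
      refine ⟨W, ⟨hW, fun τ hτ => hmv σ hσ ⟨W, ⟨hW, hσW⟩, hτ⟩⟩, hσW⟩
    · rintro ⟨W, ⟨-, hWsub⟩, hσW⟩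
      exact hWsub hσW
  -- `S ⊆ P \ E`
  have hSPE : S ⊆ P \ E := hinvS ▸ invPart_subset 𝒱 (P \ E)
  -- `V ⊆ P \ E`
  have hVPE : V ⊆ P \ E := by
    obtain ⟨σ0, hσ0V, hσ0S⟩ := hVS
    intro τ hτ
    exact hmv σ0 (hSPE hσ0S) ⟨V, ⟨hV.1, hσ0V⟩, hτ⟩
  -- hence the hull is contained in `P \ E`
  have hhull : hull 𝒱' (S ∪ V) ⊆ P \ E :=
    Set.sInter_subset_of_mem
      ⟨fun σ hσ => hPK hσ.1, hconv, hcomp, Set.union_subset hSPE hVPE⟩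
  have h1 : invPart 𝒱' (hull 𝒱' (S ∪ V)) ⊆ S'' :=
    hinv'' ▸ invPart_mono 𝒱' hhull
  refine ⟨h1, fun hS''S => Set.Subset.antisymm h1 ?_⟩
  -- `S ∪ V ⊆ hull 𝒱' (S ∪ V)`
  have hsubhull : S ∪ V ⊆ hull 𝒱' (S ∪ V) :=
    Set.subset_sInter fun A hA => hA.2.2.2
  intro σ hσ
  rw [← hinv''] at hσ
  obtain ⟨ρ, he, hPE, i, rfl⟩ := hσ
  refine ⟨ρ, he, fun j => ?_, i, rfl⟩
  have hρj : ρ j ∈ invPart 𝒱' (P \ E) := ⟨ρ, he, hPE, j, rfl⟩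
  exact hsubhull (Set.mem_union_left _ (hS''S (hinv'' ▸ hρj)))

end CDS
end
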